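/- Let ν_0, ν_1 : ℕ → ℝ be the (unique) sequences satisfying ν_i(0) = ν_i(1) = 0 and, for all n ≥ 2 and i ∈ {0,1}, ν_i(n) = E[ν_0(I_n^i)] + E[ν_1(n − I_n^i)] + n, where I_n^i is binomial B(n, p_{i0}) distributed. Then ν_i(n) = (1/H) · n log n + O(n) as n → ∞, for both i ∈ {0,1}. (These ν_i(n) are the expected numbers of bucket operations E[B_n^i] of radix sort under the Markov source model with initial distribution ρ_i.) -/

import Mathlib

/-!
Write `c = 1 / H`, `q i = p i 0` and `h = binEntropy`. The profile `f i n = c n log n + a i n`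
solves the recurrence up to an error in `[0, c]`: for `I ~ B(n, q)` one has
`nq log(nq) ≤ E[I log I] ≤ nq log(nq) + (1 - q)` (tangent line and a quadratic correction of
`x log x` at the mean, plus the binomial variance), and
`nq log(nq) + n(1-q) log(n(1-q)) = n log n - n h(q)`, so the entropy terms cancel exactly when
`a` solves the Poisson equation `a = P a + (1 - c h)`. That equation is solvable because
`1 - c h` has stationary mean `1 - c H = 0`, and its solutions may be shifted by constants.
Shifting down gives a subsolution; shifting up and subtracting `K (1 - 0 ^ n)` (the indicator
of `n ≠ 0`) gives a supersolution, since that term gains `K (1 - q^n - (1-q)^n) ≥ 2 K q (1-q)`.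
A maximum principle for the recurrence, whose weight at level `n` itself is
`q^n + (1-q)^n < 1`, squeezes `ν` between the two, both `c n log n + O(n)`.
-/

open Filter Asymptotics Real

/-- Expectation of `a` under the binomial distribution `B(n, p)`. -/
noncomputable def binomExp (p : ℝ) (n : ℕ) (a : ℕ → ℝ) : ℝ :=
  ∑ k ∈ Finset.range (n + 1), (n.choose k : ℝ) * p ^ k * (1 - p) ^ (n - k) * a k

section Binomial

variable (p : ℝ) (n : ℕ)

lemma binomExp_eq_sum_bernsteinPolynomial (a : ℕ → ℝ) :
    binomExp p n a = ∑ k ∈ Finset.range (n + 1), a k * (bernsteinPolynomial ℝ n k).eval p := by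
  simp [binomExp, bernsteinPolynomial, mul_comm]

lemma binomExp_pow (x : ℝ) : binomExp p n (fun k => x ^ k) = (p * x + (1 - p)) ^ n := by
  rw [add_pow, binomExp]
  exact Finset.sum_congr rfl fun k _ => by ring

lemma binomExp_one : binomExp p n (fun _ => 1) = 1 := by
  simpa using binomExp_pow p n 1

lemma binomExp_natCast : binomExp p n (fun k => (k : ℝ)) = n * p := by
  simpa [binomExp_eq_sum_bernsteinPolynomial, Polynomial.eval_finsetSum, nsmul_eq_mul] using
    congrArg (Polynomial.eval p) (bernsteinPolynomial.sum_smul ℝ n)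

lemma binomExp_sub_mul_sq : binomExp p n (fun k => ((k : ℝ) - n * p) ^ 2) = n * p * (1 - p) := by
  have h := congrArg (Polynomial.eval p) (bernsteinPolynomial.variance ℝ n)
  simp only [Polynomial.eval_finsetSum, Polynomial.eval_mul, Polynomial.eval_pow,
    Polynomial.eval_sub, Polynomial.eval_X, Polynomial.eval_natCast,
    Polynomial.eval_one, nsmul_eq_mul] at h
  rw [binomExp_eq_sum_bernsteinPolynomial, ← h]
  exact Finset.sum_congr rfl fun k _ => by ring

variable {p n}

lemma binomExp_add (a b : ℕ → ℝ) :
    binomExp p n (fun k => a k + b k) = binomExp p n a + binomExp p n b := by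
  simp only [binomExp, ← Finset.sum_add_distrib, mul_add]

lemma binomExp_const_mul (c : ℝ) (a : ℕ → ℝ) :
    binomExp p n (fun k => c * a k) = c * binomExp p n a := by
  simp only [binomExp, Finset.mul_sum]
  exact Finset.sum_congr rfl fun k _ => by ring

lemma binomExp_sub (a b : ℕ → ℝ) :
    binomExp p n (fun k => a k - b k) = binomExp p n a - binomExp p n b := by
  simp only [binomExp, ← Finset.sum_sub_distrib, mul_sub]

lemma binomExp_comp_sub (a : ℕ → ℝ) :
    binomExp p n (fun k => a (n - k)) = binomExp (1 - p) n a := by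
  rw [binomExp, ← Finset.sum_range_reflect]
  refine Finset.sum_congr rfl fun k hk => ?_
  have hk : k ≤ n := Nat.lt_succ_iff.mp (Finset.mem_range.mp hk)
  simp only [add_tsub_cancel_right, Nat.sub_sub_self hk, Nat.choose_symm hk, sub_sub_cancel]
  ring

lemma binomExp_weight_nonneg (hp : p ∈ Set.Icc 0 1) (k : ℕ) :
    0 ≤ (n.choose k : ℝ) * p ^ k * (1 - p) ^ (n - k) := by
  have := sub_nonneg.2 hp.2
  have := hp.1
  positivity

lemma binomExp_mono (hp : p ∈ Set.Icc 0 1) {a b : ℕ → ℝ} (h : ∀ k ≤ n, a k ≤ b k) :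
    binomExp p n a ≤ binomExp p n b :=
  Finset.sum_le_sum fun k hk => mul_le_mul_of_nonneg_left
    (h k (Nat.lt_succ_iff.mp (Finset.mem_range.mp hk))) (binomExp_weight_nonneg hp k)

lemma binomExp_le_pow_mul (hp : p ∈ Set.Icc 0 1) {a : ℕ → ℝ} (h : ∀ k < n, a k ≤ 0) :
    binomExp p n a ≤ p ^ n * a n := by
  rw [binomExp, Finset.sum_range_succ, Nat.choose_self, Nat.sub_self]
  have : ∑ k ∈ Finset.range n, (n.choose k : ℝ) * p ^ k * (1 - p) ^ (n - k) * a k ≤ 0 :=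
    Finset.sum_nonpos fun k hk => mul_nonpos_of_nonneg_of_nonpos
      (binomExp_weight_nonneg hp k) (h k (Finset.mem_range.mp hk))
  simp only [Nat.cast_one, one_mul, pow_zero, mul_one]
  linarith

lemma binomExp_quadratic (c₀ c₁ c₂ : ℝ) :
    binomExp p n (fun k => c₀ + c₁ * k + c₂ * ((k : ℝ) - n * p) ^ 2)
      = c₀ + c₁ * (n * p) + c₂ * (n * p * (1 - p)) := by
  rw [binomExp_add, binomExp_add, binomExp_const_mul, binomExp_const_mul, binomExp_natCast,
    binomExp_sub_mul_sq, ← mul_one c₀, binomExp_const_mul, binomExp_one, mul_one]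

end Binomial

lemma mul_log_add_sub_le_mul_log {x m : ℝ} (hx : 0 ≤ x) (hm : 0 < m) :
    x * log m + (x - m) ≤ x * log x := by
  rcases hx.eq_or_lt with rfl | hx
  · simpa using hm.le
  have h := mul_le_mul_of_nonneg_left (log_le_sub_one_of_pos (div_pos hm hx)) hx.le
  rw [log_div hm.ne' hx.ne', mul_sub_one, mul_div_cancel₀ _ hx.ne'] at h
  linarith

lemma mul_log_le_add_sub_add_sq_div {x m : ℝ} (hx : 0 ≤ x) (hm : 0 < m) :
    x * log x ≤ x * log m + (x - m) + (x - m) ^ 2 / m := by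
  rcases hx.eq_or_lt with rfl | hx
  · simp only [zero_mul, zero_sub, even_two, Even.neg_pow]
    rw [sq, mul_self_div_self]
    linarith
  have h := mul_le_mul_of_nonneg_left (log_le_sub_one_of_pos (div_pos hx hm)) hx.le
  rw [log_div hx.ne' hm.ne'] at h
  have : x * (x / m - 1) = (x - m) + (x - m) ^ 2 / m := by field_simp; ring
  linarith

section MulLog

variable {q : ℝ} {n : ℕ}

lemma mul_log_le_binomExp_mul_log (hq : q ∈ Set.Ioc 0 1) (hn : 0 < n) :
    (n * q) * log (n * q) ≤ binomExp q n (fun k => k * log k) := by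
  have hm : (0 : ℝ) < n * q := mul_pos (Nat.cast_pos.2 hn) hq.1
  calc (n * q) * log (n * q)
      = binomExp q n (fun k => -(n * q) + (log (n * q) + 1) * k + 0 * ((k : ℝ) - n * q) ^ 2) := by
        rw [binomExp_quadratic]; ring
    _ ≤ _ := binomExp_mono (Set.Ioc_subset_Icc_self hq) fun k _ => by
        linarith [mul_log_add_sub_le_mul_log (Nat.cast_nonneg k) hm]

lemma binomExp_mul_log_le (hq : q ∈ Set.Ioc 0 1) (hn : 0 < n) :
    binomExp q n (fun k => k * log k) ≤ (n * q) * log (n * q) + (1 - q) := by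
  have hm : (0 : ℝ) < n * q := mul_pos (Nat.cast_pos.2 hn) hq.1
  calc binomExp q n (fun k => k * log k)
      ≤ binomExp q n (fun k => -(n * q) + (log (n * q) + 1) * k
          + (n * q)⁻¹ * ((k : ℝ) - n * q) ^ 2) :=
        binomExp_mono (Set.Ioc_subset_Icc_self hq) fun k _ => by
          have := mul_log_le_add_sub_add_sq_div (Nat.cast_nonneg k) hm
          rw [div_eq_inv_mul] at this
          linarith
    _ = (n * q) * log (n * q) + (1 - q) := by
        have : (n : ℝ) ≠ 0 := Nat.cast_ne_zero.2 hn.ne'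
        have : q ≠ 0 := hq.1.ne'
        rw [binomExp_quadratic]; field_simp; ring

end MulLog

lemma mul_log_add_mul_log_one_sub {n q : ℝ} (hn : 0 < n) (hq : q ∈ Set.Ioo 0 1) :
    (n * q) * log (n * q) + (n * (1 - q)) * log (n * (1 - q)) = n * log n - n * binEntropy q := by
  rw [log_mul hn.ne' hq.1.ne', log_mul hn.ne' (sub_pos.2 hq.2).ne', binEntropy, log_inv, log_inv]
  ring

lemma pow_add_one_sub_pow_le {q : ℝ} (hq : q ∈ Set.Icc 0 1) {n : ℕ} (hn : 2 ≤ n) :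
    q ^ n + (1 - q) ^ n ≤ 1 - 2 * q * (1 - q) := by
  have h₀ := pow_le_pow_of_le_one hq.1 hq.2 hn
  have h₁ := pow_le_pow_of_le_one (sub_nonneg.2 hq.2) (sub_le_self 1 hq.1) hn
  nlinarith

noncomputable def childExp (q : Fin 2 → ℝ) (u : Fin 2 → ℕ → ℝ) (i : Fin 2) (n : ℕ) : ℝ :=
  binomExp (q i) n (u 0) + binomExp (q i) n (fun k => u 1 (n - k))

section Comparison

variable {q : Fin 2 → ℝ}

lemma childExp_eq (u : Fin 2 → ℕ → ℝ) (i : Fin 2) (n : ℕ) :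
    childExp q u i n = binomExp (q i) n (u 0) + binomExp (1 - q i) n (u 1) := by
  rw [childExp, binomExp_comp_sub]

lemma childExp_sub (u v : Fin 2 → ℕ → ℝ) (i : Fin 2) (n : ℕ) :
    childExp q (u - v) i n = childExp q u i n - childExp q v i n := by
  have h j (r : ℝ) : binomExp r n ((u - v) j) = binomExp r n (u j) - binomExp r n (v j) :=
    binomExp_sub (u j) (v j)
  rw [childExp_eq, childExp_eq, childExp_eq, h, h]
  ring

lemma childExp_le_pow_mul (hq : ∀ i, q i ∈ Set.Icc 0 1) {δ : Fin 2 → ℕ → ℝ} {n : ℕ}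
    (hδ : ∀ j, ∀ k < n, δ j k ≤ 0) (i : Fin 2) :
    childExp q δ i n ≤ q i ^ n * δ 0 n + (1 - q i) ^ n * δ 1 n := by
  rw [childExp_eq]
  have h₁ : 1 - q i ∈ Set.Icc 0 1 := ⟨sub_nonneg.2 (hq i).2, sub_le_self 1 (hq i).1⟩
  exact add_le_add (binomExp_le_pow_mul (hq i) (hδ 0)) (binomExp_le_pow_mul h₁ (hδ 1))

theorem nonpos_of_le_childExp (hq : ∀ i, q i ∈ Set.Ioo 0 1) {δ : Fin 2 → ℕ → ℝ}
    (h₀ : ∀ i, δ i 0 ≤ 0) (h₁ : ∀ i, δ i 1 ≤ 0)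
    (hδ : ∀ i n, 2 ≤ n → δ i n ≤ childExp q δ i n) (n : ℕ) (i : Fin 2) : δ i n ≤ 0 := by
  induction n using Nat.strong_induction_on generalizing i with
  | _ n ih =>
  match n, ih with
  | 0, _ => exact h₀ i
  | 1, _ => exact h₁ i
  | n + 2, ih =>
    have hq' i : q i ∈ Set.Icc 0 1 := Set.Ioo_subset_Icc_self (hq i)
    have hstep j := (hδ j _ (by omega)).trans (childExp_le_pow_mul hq' (fun j k hk => ih k hk j) j)
    have hsum j : q j ^ (n + 2) + (1 - q j) ^ (n + 2) < 1 := by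
      have := pow_add_one_sub_pow_le (hq' j) (by omega : 2 ≤ n + 2)
      nlinarith [(hq j).1, (hq j).2]
    have hpos j : 0 ≤ q j ^ (n + 2) ∧ 0 ≤ (1 - q j) ^ (n + 2) :=
      ⟨pow_nonneg (hq' j).1 _, pow_nonneg (sub_nonneg.2 (hq' j).2) _⟩
    -- the larger of `δ 0 (n+2)`, `δ 1 (n+2)` is at most a sub-convex combination of itself
    have hmax : max (δ 0 (n + 2)) (δ 1 (n + 2)) ≤ 0 := by
      by_contra! hM
      obtain ⟨j, hj⟩ : ∃ j, δ j (n + 2) = max (δ 0 (n + 2)) (δ 1 (n + 2)) := by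
        rcases max_choice (δ 0 (n + 2)) (δ 1 (n + 2)) with h | h
        exacts [⟨0, h.symm⟩, ⟨1, h.symm⟩]
      have := hstep j
      nlinarith [le_max_left (δ 0 (n + 2)) (δ 1 (n + 2)), le_max_right (δ 0 (n + 2)) (δ 1 (n + 2)),
        hsum j, hpos j]
    fin_cases i
    exacts [(le_max_left _ _).trans hmax, (le_max_right _ _).trans hmax]

end Comparison

/-- `a` solves the Poisson equation `a = P a + g` of the chain with transition matrix
`P = !![q 0, 1 - q 0; q 1, 1 - q 1]`. -/
def IsPoissonSolution (q g a : Fin 2 → ℝ) : Prop :=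
  ∀ i, a i = q i * a 0 + (1 - q i) * a 1 + g i

lemma IsPoissonSolution.add_const {q g a : Fin 2 → ℝ} (ha : IsPoissonSolution q g a) (d : ℝ) :
    IsPoissonSolution q g (fun i => a i + d) := fun i => by
  linear_combination ha i

/-- The Poisson equation is solvable when `g` has mean zero under the stationary distribution,
which is proportional to `(q 1, 1 - q 0)`. -/
lemma exists_isPoissonSolution {q g : Fin 2 → ℝ} (hq : q 0 ≠ 1)
    (hg : q 1 * g 0 + (1 - q 0) * g 1 = 0) : ∃ a, IsPoissonSolution q g a := by
  have hq : 1 - q 0 ≠ 0 := sub_ne_zero.2 hq.symm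
  refine ⟨![g 0 / (1 - q 0), 0], fun i => ?_⟩
  fin_cases i
  · simp only [Fin.zero_eta, Matrix.cons_val_zero, Matrix.cons_val_one, mul_zero, add_zero]
    field_simp; ring
  · simp only [Fin.mk_one, Matrix.cons_val_zero, Matrix.cons_val_one, mul_zero, add_zero]
    field_simp; linarith

noncomputable def logLinear (c : ℝ) (a : Fin 2 → ℝ) (i : Fin 2) (n : ℕ) : ℝ :=
  c * (n * log n) + a i * n

section LogLinear

variable {q : Fin 2 → ℝ} {c : ℝ} {a : Fin 2 → ℝ}

lemma binomExp_logLinear (r : ℝ) (n : ℕ) (j : Fin 2) :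
    binomExp r n (logLinear c a j) = c * binomExp r n (fun k => k * log k) + a j * (n * r) := by
  change binomExp r n (fun k => c * (k * log k) + a j * k) = _
  rw [binomExp_add, binomExp_const_mul, binomExp_const_mul, binomExp_natCast]

lemma logLinear_le_childExp_add (hq : ∀ i, q i ∈ Set.Ioo 0 1) (hc : 0 ≤ c)
    (ha : IsPoissonSolution q (fun i => 1 - c * binEntropy (q i)) a) {n : ℕ} (hn : 0 < n)
    (i : Fin 2) :
    logLinear c a i n ≤ childExp q (logLinear c a) i n + n ∧
      childExp q (logLinear c a) i n + n ≤ logLinear c a i n + c := by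
  have hq₀ : q i ∈ Set.Ioc 0 1 := Set.Ioo_subset_Ioc_self (hq i)
  have hq₁ : 1 - q i ∈ Set.Ioc 0 1 := ⟨sub_pos.2 (hq i).2, sub_le_self 1 (hq i).1.le⟩
  have hent := mul_log_add_mul_log_one_sub (Nat.cast_pos.2 hn) (hq i)
  have hlo₀ := mul_le_mul_of_nonneg_left (mul_log_le_binomExp_mul_log hq₀ hn) hc
  have hlo₁ := mul_le_mul_of_nonneg_left (mul_log_le_binomExp_mul_log hq₁ hn) hc
  have hhi₀ := mul_le_mul_of_nonneg_left (binomExp_mul_log_le hq₀ hn) hc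
  have hhi₁ := mul_le_mul_of_nonneg_left (binomExp_mul_log_le hq₁ hn) hc
  have hai := ha i
  rw [childExp_eq, binomExp_logLinear, binomExp_logLinear, logLinear]
  constructor <;> nlinarith

lemma childExp_logLinear_sub_le (hq : ∀ i, q i ∈ Set.Ioo 0 1) (hc : 0 ≤ c)
    (ha : IsPoissonSolution q (fun i => 1 - c * binEntropy (q i)) a) {K : ℝ}
    (hK : ∀ i, c ≤ K * (2 * q i * (1 - q i))) {n : ℕ} (hn : 2 ≤ n) (i : Fin 2) :
    childExp q (fun j k => logLinear c a j k - K * (1 - 0 ^ k)) i n + n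
      ≤ logLinear c a i n - K * (1 - 0 ^ n) := by
  have hE (r : ℝ) (j : Fin 2) : binomExp r n (fun k => logLinear c a j k - K * (1 - 0 ^ k))
      = binomExp r n (logLinear c a j) - K * (1 - (1 - r) ^ n) := by
    rw [binomExp_sub, binomExp_const_mul, binomExp_sub, binomExp_one, binomExp_pow]
    ring_nf
  have hpow := pow_add_one_sub_pow_le (Set.Ioo_subset_Icc_self (hq i)) hn
  have hsol := (logLinear_le_childExp_add hq hc ha (by omega : 0 < n) i).2
  rw [childExp_eq] at hsol ⊢
  have hvar : 0 < 2 * q i * (1 - q i) := by nlinarith [(hq i).1, (hq i).2]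
  have hK₀ : 0 ≤ K := nonneg_of_mul_nonneg_left (hc.trans (hK i)) hvar
  rw [hE, hE, sub_sub_cancel, zero_pow (by omega)]
  linarith [mul_le_mul_of_nonneg_left hpow hK₀, hK i]

variable {ν : Fin 2 → ℕ → ℝ}

lemma logLinear_le_of_nonpos (hq : ∀ i, q i ∈ Set.Ioo 0 1) (hc : 0 ≤ c)
    (ha : IsPoissonSolution q (fun i => 1 - c * binEntropy (q i)) a) (ha₀ : ∀ i, a i ≤ 0)
    (hν₀ : ∀ i, ν i 0 = 0) (hν₁ : ∀ i, ν i 1 = 0)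
    (hν : ∀ i n, 2 ≤ n → ν i n = childExp q ν i n + n) (n : ℕ) (i : Fin 2) :
    logLinear c a i n ≤ ν i n := by
  refine sub_nonpos.1 (nonpos_of_le_childExp hq (δ := logLinear c a - ν) (fun i => ?_)
    (fun i => ?_) (fun i n hn => ?_) n i)
  · simp [logLinear, hν₀]
  · simpa [logLinear, hν₁] using ha₀ i
  · rw [childExp_sub, Pi.sub_apply, Pi.sub_apply, hν i n hn]
    linarith [(logLinear_le_childExp_add hq hc ha (by omega : 0 < n) i).1]

lemma le_logLinear_sub_of_le (hq : ∀ i, q i ∈ Set.Ioo 0 1) (hc : 0 ≤ c)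
    (ha : IsPoissonSolution q (fun i => 1 - c * binEntropy (q i)) a) {K : ℝ}
    (hK : ∀ i, c ≤ K * (2 * q i * (1 - q i))) (haK : ∀ i, K ≤ a i)
    (hν₀ : ∀ i, ν i 0 = 0) (hν₁ : ∀ i, ν i 1 = 0)
    (hν : ∀ i n, 2 ≤ n → ν i n = childExp q ν i n + n) (n : ℕ) (i : Fin 2) :
    ν i n ≤ logLinear c a i n - K * (1 - 0 ^ n) := by
  refine sub_nonpos.1 (nonpos_of_le_childExp hq
    (δ := ν - fun j k => logLinear c a j k - K * (1 - 0 ^ k)) (fun i => ?_) (fun i => ?_)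
    (fun i n hn => ?_) n i)
  · simp [logLinear, hν₀]
  · simpa [logLinear, hν₁] using haK i
  · rw [childExp_sub, Pi.sub_apply, Pi.sub_apply, hν i n hn]
    linarith [childExp_logLinear_sub_le hq hc ha hK hn i]

end LogLinear

lemma exists_forall_le_mul_two_mul_mul_one_sub {q : Fin 2 → ℝ} (hq : ∀ i, q i ∈ Set.Ioo 0 1)
    {c : ℝ} (hc : 0 ≤ c) : ∃ K, ∀ i, c ≤ K * (2 * q i * (1 - q i)) := by
  have hvar i : 0 < 2 * q i * (1 - q i) := by nlinarith [(hq i).1, (hq i).2]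
  refine ⟨∑ j, c / (2 * q j * (1 - q j)), fun i => ?_⟩
  have hKi : c / (2 * q i * (1 - q i)) ≤ ∑ j, c / (2 * q j * (1 - q j)) :=
    Finset.single_le_sum (f := fun j => c / (2 * q j * (1 - q j)))
      (fun j _ => div_nonneg hc (hvar j).le) (Finset.mem_univ i)
  simpa [div_mul_cancel₀ _ (hvar i).ne'] using mul_le_mul_of_nonneg_right hKi (hvar i).le

theorem sub_mul_log_isBigO {q : Fin 2 → ℝ} (hq : ∀ i, q i ∈ Set.Ioo 0 1) {c : ℝ} (hc : 0 ≤ c)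
    {a : Fin 2 → ℝ} (ha : IsPoissonSolution q (fun i => 1 - c * binEntropy (q i)) a)
    {ν : Fin 2 → ℕ → ℝ} (hν₀ : ∀ i, ν i 0 = 0) (hν₁ : ∀ i, ν i 1 = 0)
    (hν : ∀ i n, 2 ≤ n → ν i n = childExp q ν i n + n) (i : Fin 2) :
    (fun n : ℕ => ν i n - c * (n * log n)) =O[atTop] (fun n : ℕ => (n : ℝ)) := by
  obtain ⟨K, hK⟩ := exists_forall_le_mul_two_mul_mul_one_sub hq hc
  have hK₀ : 0 ≤ K :=
    nonneg_of_mul_nonneg_left (hc.trans (hK 0)) (by nlinarith [(hq 0).1, (hq 0).2])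
  set A := ∑ j, |a j|
  have hA j : |a j| ≤ A := Finset.single_le_sum (fun j _ => abs_nonneg (a j)) (Finset.mem_univ j)
  have hlower := logLinear_le_of_nonpos hq hc (ha.add_const (-A))
    (fun j => by linarith [le_abs_self (a j), hA j]) hν₀ hν₁ hν
  have hupper := le_logLinear_sub_of_le hq hc (ha.add_const (A + K)) hK
    (fun j => by linarith [neg_abs_le (a j), hA j]) hν₀ hν₁ hν
  refine IsBigO.of_bound (2 * A + K) (Eventually.of_forall fun n => ?_)
  have hlo := hlower n i
  have hhi := hupper n i
  simp only [logLinear] at hlo hhi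
  have h0n : 0 ≤ 1 - (0 : ℝ) ^ n := sub_nonneg.2 (pow_le_one₀ le_rfl zero_le_one)
  have hn : (0 : ℝ) ≤ n := n.cast_nonneg
  rw [Real.norm_eq_abs, Real.norm_natCast, abs_le]
  constructor
  · nlinarith [neg_abs_le (a i), hA i]
  · nlinarith [le_abs_self (a i), hA i]

theorem stmt5_general (p : Fin 2 → Fin 2 → ℝ)
    (hp : ∀ i j, p i j ∈ Set.Ioo (0 : ℝ) 1)
    (hsum : ∀ i, p i 0 + p i 1 = 1)
    (pi' H' : Fin 2 → ℝ) (H : ℝ)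
    (hpi0 : pi' 0 = p 1 0 / (p 0 1 + p 1 0))
    (hpi1 : pi' 1 = p 0 1 / (p 0 1 + p 1 0))
    (hH' : ∀ i, H' i = -(p i 0 * Real.log (p i 0)) - p i 1 * Real.log (p i 1))
    (hH : H = pi' 0 * H' 0 + pi' 1 * H' 1) (hHpos : 0 < H)
    (ν : Fin 2 → ℕ → ℝ)
    (hinit : ∀ i : Fin 2, ν i 0 = 0 ∧ ν i 1 = 0)
    (hrec : ∀ i : Fin 2, ∀ n : ℕ, 2 ≤ n →
      ν i n = binomExp (p i 0) n (ν 0) + binomExp (p i 0) n (fun k => ν 1 (n - k)) + n) :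
    ∀ i : Fin 2,
      (fun n : ℕ => ν i n - 1 / H * ((n : ℝ) * Real.log n))
        =O[atTop] (fun n : ℕ => (n : ℝ)) := by
  set q : Fin 2 → ℝ := fun i => p i 0
  set c := 1 / H
  have hq i : q i ∈ Set.Ioo 0 1 := hp i 0
  have hc : 0 ≤ c := by positivity
  have hp₁ i : p i 1 = 1 - q i := by linarith [hsum i]
  have hH'q i : H' i = binEntropy (q i) := by
    rw [hH' i, hp₁, binEntropy, log_inv, log_inv]; ring
  obtain ⟨a, ha⟩ : ∃ a, IsPoissonSolution q (fun i => 1 - c * binEntropy (q i)) a := by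
    refine exists_isPoissonSolution (hq 0).2.ne ?_
    have hden : p 0 1 + p 1 0 ≠ 0 := (add_pos (hp 0 1).1 (hp 1 0).1).ne'
    have hHsum : H * (p 0 1 + p 1 0) = p 1 0 * H' 0 + p 0 1 * H' 1 := by
      rw [hH, hpi0, hpi1]; field_simp
    rw [← hH'q, ← hH'q, ← hp₁]
    simp only [c, q]
    field_simp
    linear_combination hHsum
  intro i
  exact sub_mul_log_isBigO hq hc ha (fun j => (hinit j).1) (fun j => (hinit j).2) hrec i

theorem stmt5 (p : Fin 2 → Fin 2 → ℝ)
    (hp : ∀ i j, p i j ∈ Set.Ioo (0 : ℝ) 1)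
    (hsum : ∀ i, p i 0 + p i 1 = 1)
    (hne : ∃ i j, p i j ≠ 1 / 2)
    (pi' H' : Fin 2 → ℝ) (H : ℝ)
    (hpi0 : pi' 0 = p 1 0 / (p 0 1 + p 1 0))
    (hpi1 : pi' 1 = p 0 1 / (p 0 1 + p 1 0))
    (hH' : ∀ i, H' i = -(p i 0 * Real.log (p i 0)) - p i 1 * Real.log (p i 1))
    (hH : H = pi' 0 * H' 0 + pi' 1 * H' 1) (hHpos : 0 < H)
    (ν : Fin 2 → ℕ → ℝ)
    (hinit : ∀ i : Fin 2, ν i 0 = 0 ∧ ν i 1 = 0)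
    (hrec : ∀ i : Fin 2, ∀ n : ℕ, 2 ≤ n →
      ν i n = binomExp (p i 0) n (ν 0) + binomExp (p i 0) n (fun k => ν 1 (n - k)) + n) :
    ∀ i : Fin 2,
      (fun n : ℕ => ν i n - 1 / H * ((n : ℝ) * Real.log n))
        =O[atTop] (fun n : ℕ => (n : ℝ)) :=
  stmt5_general p hp hsum pi' H' H hpi0 hpi1 hH' hH hHpos ν hinit hrec
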